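/- Let m ≤ n, μ a Borel probability measure on ℝᵐ with finite p-th moment, and ν a Borel probability measure on ℝⁿ with finite p-th moment. The augmented p-Wasserstein distance Ŵ_p(μ,ν) = inf_{β ∈ Φ⁻(ν,m)} W_p(μ,β) equals 0 if and only if there exist V ∈ O(m,n) and b ∈ ℝᵐ such that φ_{V,b}(ν) = μ. -/

import Mathlib

open MeasureTheory ENNReal

noncomputable section

/-- The affine map `x ↦ Vx + b` from `ℝⁿ` to `ℝᵐ` (Euclidean spaces). -/
def phiAff {m n : ℕ} (V : Matrix (Fin m) (Fin n) ℝ)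
    (b : EuclideanSpace ℝ (Fin m)) (x : EuclideanSpace ℝ (Fin n)) :
    EuclideanSpace ℝ (Fin m) :=
  (EuclideanSpace.equiv (Fin m) ℝ).symm
    (V.mulVec (EuclideanSpace.equiv (Fin n) ℝ x) + (EuclideanSpace.equiv (Fin m) ℝ) b)

/-- The `p`-Wasserstein distance: infimum over couplings of
`(∫ ‖x − y‖^p dγ)^{1/p}` (Euclidean norm). -/
def wassersteinDist (p : ℝ) {k : ℕ}
    (μ ν : Measure (EuclideanSpace ℝ (Fin k))) : ℝ :=
  sInf {r : ℝ | ∃ γ : Measure (EuclideanSpace ℝ (Fin k) × EuclideanSpace ℝ (Fin k)),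
    γ.map Prod.fst = μ ∧ γ.map Prod.snd = ν ∧
    r = (∫ z, ‖z.1 - z.2‖ ^ p ∂γ) ^ (1 / p)}

/-- The `f`-divergence `D_f(μ‖ν) = ∫ f(dμ/dν) dν`. -/
def fDivergence (f : ℝ → ℝ) {k : ℕ}
    (μ ν : Measure (EuclideanSpace ℝ (Fin k))) : ℝ :=
  ∫ x, f ((μ.rnDeriv ν x).toReal) ∂ν

/-- The Kullback–Leibler divergence `∫ log(dμ/dν) dμ`. -/
def klDivergence {k : ℕ} (μ ν : Measure (EuclideanSpace ℝ (Fin k))) : ℝ :=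
  ∫ x, Real.log ((μ.rnDeriv ν x).toReal) ∂μ

/-- The mixture `(1−θ)μ + θν`. -/
def mixture (θ : ℝ) {k : ℕ} (μ ν : Measure (EuclideanSpace ℝ (Fin k))) :
    Measure (EuclideanSpace ℝ (Fin k)) :=
  ENNReal.ofReal (1 - θ) • μ + ENNReal.ofReal θ • ν

/-- The θ-weighted Jensen–Shannon divergence. -/
def jsDivergence (θ : ℝ) {k : ℕ} (μ ν : Measure (EuclideanSpace ℝ (Fin k))) : ℝ :=
  (1 / 2) * klDivergence μ (mixture θ μ ν) + (1 / 2) * klDivergence ν (mixture θ ν μ)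

/-- The total variation metric `sup_A |μ(A) − ν(A)|`. -/
def tvDist {k : ℕ} (μ ν : Measure (EuclideanSpace ℝ (Fin k))) : ℝ :=
  sSup {r : ℝ | ∃ A : Set (EuclideanSpace ℝ (Fin k)), MeasurableSet A ∧
    r = |(μ A).toReal - (ν A).toReal|}

/-- The Hellinger squared divergence `∫ (√(dμ/dν) − 1)² dν`. -/
def hellingerSq {k : ℕ} (μ ν : Measure (EuclideanSpace ℝ (Fin k))) : ℝ :=
  ∫ x, (Real.sqrt ((μ.rnDeriv ν x).toReal) - 1) ^ 2 ∂ν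

/-- `ν` has a strictly positive density w.r.t. Lebesgue measure. -/
def HasPosDensity {k : ℕ} (ν : Measure (EuclideanSpace ℝ (Fin k))) : Prop :=
  ∃ t : EuclideanSpace ℝ (Fin k) → ℝ, Measurable t ∧ (∀ x, 0 < t x) ∧
    ν = volume.withDensity fun x => ENNReal.ofReal (t x)

end

/-!
If `φ_{V,b}(ν) = μ`, the diagonal coupling gives `W_p(μ, φ_{V,b}(ν)) = 0`. Conversely, choose
`(V_k, b_k)` with `W_p(μ, φ_{V_k,b_k}(ν)) → 0`. The `V_k` lie in the compact set of matrices with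
orthonormal rows, and the `b_k` stay bounded: a coupling of cost `< 1` bounds the distance between
the mean of `μ` and the mean `V_k e + b_k` of `φ_{V_k,b_k}(ν)`, where `e` is the mean of `ν`. Along
a subsequence `(V_k, b_k) → (V, b)`, the measures `φ_{V_k,b_k}(ν)` converge weakly to
`φ_{V,b}(ν)` by dominated convergence, and to `μ` because convergence in `W_p` forces the
integrals of bounded Lipschitz functions to converge. Weak limits are unique.
-/

open Filter Topology
open scoped Matrix

theorem MeasureTheory.ProbabilityMeasure.tendsto_map_of_ae_tendsto {X Y ι : Type*}
    [MeasurableSpace X] [MeasurableSpace Y] [TopologicalSpace Y] [OpensMeasurableSpace Y]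
    {l : Filter ι} [l.IsCountablyGenerated] (ν : ProbabilityMeasure X) {f : ι → X → Y}
    {g : X → Y} (hf : ∀ i, AEMeasurable (f i) ν) (hg : AEMeasurable g ν)
    (hlim : ∀ᵐ x ∂(ν : Measure X), Tendsto (fun i => f i x) l (𝓝 (g x))) :
    Tendsto (fun i => ν.map (hf i)) l (𝓝 (ν.map hg)) := by
  rw [ProbabilityMeasure.tendsto_iff_forall_integral_tendsto]
  intro F
  simp only [ProbabilityMeasure.toMeasure_map]
  rw [integral_map hg F.continuous.aestronglyMeasurable]
  simp_rw [integral_map (hf _) F.continuous.aestronglyMeasurable]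
  exact tendsto_integral_filter_of_dominated_convergence (fun _ => ‖F‖)
    (Eventually.of_forall fun i => F.continuous.aestronglyMeasurable.comp_aemeasurable (hf i))
    (Eventually.of_forall fun i => ae_of_all _ fun x => F.norm_coe_le_norm (f i x))
    (integrable_const _) (hlim.mono fun x hx => (F.continuous.tendsto (g x)).comp hx)

section AffineMaps

variable {m n : ℕ}

theorem phiAff_apply (V : Matrix (Fin m) (Fin n) ℝ) (b : EuclideanSpace ℝ (Fin m))
    (x : EuclideanSpace ℝ (Fin n)) : phiAff V b x = Matrix.toEuclideanLin V x + b := rfl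

theorem continuous_phiAff_matrix_translation (x : EuclideanSpace ℝ (Fin n)) :
    Continuous fun q : Matrix (Fin m) (Fin n) ℝ × EuclideanSpace ℝ (Fin m) =>
      phiAff q.1 q.2 x := by
  unfold phiAff
  fun_prop

theorem continuous_phiAff (V : Matrix (Fin m) (Fin n) ℝ) (b : EuclideanSpace ℝ (Fin m)) :
    Continuous (phiAff V b) := by
  unfold phiAff
  fun_prop

theorem tendsto_map_phiAff {ι : Type*} {l : Filter ι} [l.IsCountablyGenerated]
    (ν : ProbabilityMeasure (EuclideanSpace ℝ (Fin n))) {V : ι → Matrix (Fin m) (Fin n) ℝ}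
    {b : ι → EuclideanSpace ℝ (Fin m)} {V' : Matrix (Fin m) (Fin n) ℝ}
    {b' : EuclideanSpace ℝ (Fin m)} (h : Tendsto (fun i => (V i, b i)) l (𝓝 (V', b'))) :
    Tendsto (fun i => ν.map (continuous_phiAff (V i) (b i)).aemeasurable) l
      (𝓝 (ν.map (continuous_phiAff V' b').aemeasurable)) :=
  ν.tendsto_map_of_ae_tendsto _ _ <| ae_of_all _ fun x =>
    ((continuous_phiAff_matrix_translation x).tendsto _).comp (f := fun i => (V i, b i)) h

variable {ν : Measure (EuclideanSpace ℝ (Fin n))}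
  (V : Matrix (Fin m) (Fin n) ℝ) (b : EuclideanSpace ℝ (Fin m))

instance [IsProbabilityMeasure ν] : IsProbabilityMeasure (ν.map (phiAff V b)) :=
  Measure.isProbabilityMeasure_map (continuous_phiAff V b).aemeasurable

theorem memLp_map_phiAff [IsFiniteMeasure ν] {q : ℝ≥0∞} (hν : MemLp id q ν) :
    MemLp id q (ν.map (phiAff V b)) :=
  (memLp_map_measure_iff aestronglyMeasurable_id (continuous_phiAff V b).aemeasurable).2 <|
    ((Matrix.toEuclideanLin V).toContinuousLinearMap.comp_memLp' hν).add (memLp_const b)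

theorem integral_map_phiAff [IsProbabilityMeasure ν] (hν : Integrable (fun x => x) ν) :
    ∫ y, y ∂(ν.map (phiAff V b)) = phiAff V b (∫ x, x ∂ν) := by
  let A := (Matrix.toEuclideanLin V).toContinuousLinearMap
  rw [integral_map (f := fun y => y) (continuous_phiAff V b).aemeasurable
    aestronglyMeasurable_id]
  change ∫ x, A x + b ∂ν = A (∫ x, x ∂ν) + b
  rw [integral_add (A.integrable_comp hν) (integrable_const b), A.integral_comp_comm hν,
    integral_const]
  simp

end AffineMaps

section OrthonormalRows

instance {ι κ R : Type*} [Countable ι] [Countable κ] [TopologicalSpace R]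
    [FirstCountableTopology R] : FirstCountableTopology (Matrix ι κ R) :=
  inferInstanceAs (FirstCountableTopology (ι → κ → R))

variable {ι κ : Type*} [Fintype κ] [DecidableEq ι]

theorem exists_mul_transpose_eq_one [DecidableEq κ] (e : ι ↪ κ) :
    ∃ V : Matrix ι κ ℝ, V * Vᵀ = 1 :=
  ⟨(1 : Matrix κ κ ℝ).submatrix e id, by
    rw [Matrix.transpose_submatrix, Matrix.transpose_one,
      ← Matrix.submatrix_mul _ _ _ _ _ Function.bijective_id, Matrix.one_mul,
      Matrix.submatrix_one_embedding]⟩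

theorem abs_le_one_of_mul_transpose_eq_one {V : Matrix ι κ ℝ} (hV : V * Vᵀ = 1)
    (i : ι) (j : κ) : |V i j| ≤ 1 := by
  have hrow : ∑ k, V i k ^ 2 = 1 := by
    simpa [Matrix.mul_apply, sq] using congrFun (congrFun hV i) i
  rw [← sq_le_one_iff_abs_le_one, ← hrow]
  exact Finset.single_le_sum (fun k _ => sq_nonneg (V i k)) (Finset.mem_univ j)

theorem isCompact_setOf_mul_transpose_eq_one [Finite ι] :
    IsCompact {V : Matrix ι κ ℝ | V * Vᵀ = 1} := by
  have hcube : IsCompact (Set.univ.pi fun _ : ι => Set.univ.pi fun _ : κ => Set.Icc (-1 : ℝ) 1) :=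
    isCompact_univ_pi fun _ => isCompact_univ_pi fun _ => isCompact_Icc
  refine hcube.of_isClosed_subset
    (isClosed_eq (continuous_id.matrix_mul continuous_id.matrix_transpose) continuous_const) ?_
  intro V hV i _ j _
  exact abs_le.1 (abs_le_one_of_mul_transpose_eq_one hV i j)

end OrthonormalRows

section Couplings

variable {X : Type*} [NormedAddCommGroup X] [MeasurableSpace X]
  {μ β : Measure X} {γ : Measure (X × X)} {p : ℝ}

theorem memLp_id_of_integrable_norm_rpow [OpensMeasurableSpace X] [SecondCountableTopology X]
    (hp : 0 < p) (h : Integrable (fun x => ‖x‖ ^ p) μ) : MemLp id (ENNReal.ofReal p) μ :=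
  (integrable_norm_rpow_iff aestronglyMeasurable_id (by simpa using hp) ofReal_ne_top).1
    (by simpa [ENNReal.toReal_ofReal hp.le] using h)

theorem integrable_norm_sub_rpow_of_map_fst_of_map_snd (hp : 0 < p)
    (hμ : MemLp id (ENNReal.ofReal p) μ) (hβ : MemLp id (ENNReal.ofReal p) β)
    (h1 : γ.map Prod.fst = μ) (h2 : γ.map Prod.snd = β) :
    Integrable (fun z : X × X => ‖z.1 - z.2‖ ^ p) γ := by
  subst h1 h2
  have hfst := hμ.comp_measurePreserving ⟨measurable_fst, rfl⟩
  have hsnd := hβ.comp_measurePreserving ⟨measurable_snd, rfl⟩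
  simpa [ENNReal.toReal_ofReal hp.le] using
    (integrable_norm_rpow_iff (hfst.sub hsnd).1 (by simpa using hp) ofReal_ne_top).2
      (hfst.sub hsnd)

theorem norm_integral_sub_integral_le_of_map_fst_of_map_snd [NormedSpace ℝ X]
    [IsProbabilityMeasure μ] (hp : 1 ≤ p)
    (hμ : MemLp id (ENNReal.ofReal p) μ) (hβ : MemLp id (ENNReal.ofReal p) β)
    (h1 : γ.map Prod.fst = μ) (h2 : γ.map Prod.snd = β) :
    ‖∫ x, x ∂μ - ∫ x, x ∂β‖ ≤ 1 + ∫ z, ‖z.1 - z.2‖ ^ p ∂γ := by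
  have hcost := integrable_norm_sub_rpow_of_map_fst_of_map_snd (by linarith) hμ hβ h1 h2
  have hp1 : 1 ≤ ENNReal.ofReal p := by simpa using hp
  subst h1 h2
  have : IsProbabilityMeasure γ := Measure.isProbabilityMeasure_of_map Prod.fst
  have hfst : Integrable (fun z : X × X => z.1) γ :=
    (hμ.integrable hp1).comp_measurable measurable_fst
  have hsnd : Integrable (fun z : X × X => z.2) γ :=
    (hβ.integrable hp1).comp_measurable measurable_snd
  rw [integral_map (f := fun x => x) measurable_fst.aemeasurable hμ.1,
    integral_map (f := fun x => x) measurable_snd.aemeasurable hβ.1,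
    ← integral_sub hfst hsnd]
  calc ‖∫ z, (z.1 - z.2) ∂γ‖
      ≤ ∫ z, ‖z.1 - z.2‖ ∂γ := norm_integral_le_integral_norm _
    _ ≤ ∫ z, (1 + ‖z.1 - z.2‖ ^ p) ∂γ := by
      refine integral_mono (hfst.sub hsnd).norm ((integrable_const 1).add hcost) fun z => ?_
      rcases le_or_gt ‖z.1 - z.2‖ 1 with h | h
      · linarith [Real.rpow_nonneg (norm_nonneg (z.1 - z.2)) p]
      · linarith [Real.self_le_rpow_of_one_le h.le hp]
    _ = 1 + ∫ z, ‖z.1 - z.2‖ ^ p ∂γ := by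
      rw [integral_add (integrable_const 1) hcost, integral_const]; simp

/-- Pairs closer than `ε` contribute at most `L * ε`; farther pairs contribute at most `C`, and
for them `1 ≤ (‖x - y‖ / ε) ^ p`. -/
theorem abs_integral_sub_integral_le_of_lipschitzWith [OpensMeasurableSpace X]
    [IsProbabilityMeasure μ] (hp : 0 ≤ p) {f : X → ℝ} {L : NNReal} {C : ℝ}
    (hfL : LipschitzWith L f) (hfC : ∀ x y, dist (f x) (f y) ≤ C)
    (hcost : Integrable (fun z : X × X => ‖z.1 - z.2‖ ^ p) γ)
    (h1 : γ.map Prod.fst = μ) (h2 : γ.map Prod.snd = β) {ε : ℝ} (hε : 0 < ε) :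
    |∫ x, f x ∂μ - ∫ x, f x ∂β| ≤ L * ε + C * (∫ z, ‖z.1 - z.2‖ ^ p ∂γ) / ε ^ p := by
  subst h1 h2
  have : IsProbabilityMeasure γ := Measure.isProbabilityMeasure_of_map Prod.fst
  have : IsProbabilityMeasure (γ.map Prod.snd) :=
    Measure.isProbabilityMeasure_map measurable_snd.aemeasurable
  let F := BoundedContinuousFunction.mkOfBound ⟨f, hfL.continuous⟩ C hfC
  have hfst : Integrable (fun z : X × X => f z.1) γ :=
    (F.integrable _).comp_measurable measurable_fst
  have hsnd : Integrable (fun z : X × X => f z.2) γ :=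
    (F.integrable _).comp_measurable measurable_snd
  have hbound : Integrable (fun z : X × X => L * ε + C * ‖z.1 - z.2‖ ^ p / ε ^ p) γ :=
    (integrable_const _).add ((hcost.const_mul C).div_const _)
  have hpt : ∀ z : X × X, |f z.1 - f z.2| ≤ L * ε + C * ‖z.1 - z.2‖ ^ p / ε ^ p := by
    intro z
    have hC : 0 ≤ C := (dist_self (f z.1)).symm.trans_le (hfC _ _)
    rcases le_or_gt ‖z.1 - z.2‖ ε with hz | hz
    · have hnear : |f z.1 - f z.2| ≤ L * ε := by
        rw [← Real.dist_eq]
        calc dist (f z.1) (f z.2) ≤ L * dist z.1 z.2 := hfL.dist_le_mul _ _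
          _ ≤ L * ε := by rw [dist_eq_norm]; gcongr
      have : 0 ≤ C * ‖z.1 - z.2‖ ^ p / ε ^ p := by positivity
      linarith
    · have hfar : 1 ≤ ‖z.1 - z.2‖ ^ p / ε ^ p := by
        rw [← Real.div_rpow (norm_nonneg _) hε.le]
        exact Real.one_le_rpow ((one_le_div hε).2 hz.le) hp
      have : C ≤ C * ‖z.1 - z.2‖ ^ p / ε ^ p := by
        rw [mul_div_assoc]; exact le_mul_of_one_le_right hC hfar
      have : 0 ≤ (L : ℝ) * ε := by positivity
      linarith [(Real.dist_eq _ _).symm.trans_le (hfC z.1 z.2)]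
  rw [integral_map measurable_fst.aemeasurable hfL.continuous.aestronglyMeasurable,
    integral_map measurable_snd.aemeasurable hfL.continuous.aestronglyMeasurable,
    ← integral_sub hfst hsnd]
  calc |∫ z, (f z.1 - f z.2) ∂γ|
      ≤ ∫ z, |f z.1 - f z.2| ∂γ := abs_integral_le_integral_abs
    _ ≤ ∫ z, (L * ε + C * ‖z.1 - z.2‖ ^ p / ε ^ p) ∂γ :=
      integral_mono (hfst.sub hsnd).abs hbound hpt
    _ = L * ε + C * (∫ z, ‖z.1 - z.2‖ ^ p ∂γ) / ε ^ p := by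
      rw [integral_add (integrable_const _) ((hcost.const_mul C).div_const _), integral_const,
        integral_div, integral_const_mul]
      simp [mul_div_assoc]

end Couplings

section Wasserstein

variable {k : ℕ} {p : ℝ}

theorem wassersteinDist_nonneg (μ β : Measure (EuclideanSpace ℝ (Fin k))) :
    0 ≤ wassersteinDist p μ β :=
  Real.sInf_nonneg <| by
    rintro r ⟨γ, -, -, rfl⟩
    exact Real.rpow_nonneg (integral_nonneg fun z => Real.rpow_nonneg (norm_nonneg _) p) _

theorem wassersteinDist_self (hp : p ≠ 0) (μ : Measure (EuclideanSpace ℝ (Fin k))) :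
    wassersteinDist p μ μ = 0 := by
  refine le_antisymm (csInf_le ⟨0, fun r hr => ?_⟩ ⟨μ.map fun x => (x, x), ?_, ?_, ?_⟩)
    (wassersteinDist_nonneg μ μ)
  · obtain ⟨γ, -, -, rfl⟩ := hr
    exact Real.rpow_nonneg (integral_nonneg fun z => Real.rpow_nonneg (norm_nonneg _) p) _
  · rw [Measure.map_map measurable_fst (by fun_prop)]; exact Measure.map_id
  · rw [Measure.map_map measurable_snd (by fun_prop)]; exact Measure.map_id
  · have hcost : Measurable fun z : EuclideanSpace ℝ (Fin k) × EuclideanSpace ℝ (Fin k) =>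
        ‖z.1 - z.2‖ ^ p := by fun_prop
    rw [integral_map (by fun_prop) hcost.aestronglyMeasurable]
    simp [Real.zero_rpow hp, hp]

theorem exists_coupling_of_wassersteinDist_lt (hp : 0 < p)
    {μ β : Measure (EuclideanSpace ℝ (Fin k))} [IsProbabilityMeasure μ]
    [IsProbabilityMeasure β] {δ : ℝ} (h : wassersteinDist p μ β < δ) :
    ∃ γ : Measure (EuclideanSpace ℝ (Fin k) × EuclideanSpace ℝ (Fin k)),
      γ.map Prod.fst = μ ∧ γ.map Prod.snd = β ∧
        ∫ z, ‖z.1 - z.2‖ ^ p ∂γ < δ ^ p := by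
  obtain ⟨_, ⟨γ, h1, h2, rfl⟩, hlt⟩ := exists_lt_of_csInf_lt
    ⟨_, by exact ⟨μ.prod β, Measure.fst_prod, Measure.snd_prod, rfl⟩⟩ h
  have hcost : 0 ≤ ∫ z, ‖z.1 - z.2‖ ^ p ∂γ :=
    integral_nonneg fun z => Real.rpow_nonneg (norm_nonneg _) p
  rw [one_div, Real.rpow_inv_lt_iff_of_pos hcost
    ((wassersteinDist_nonneg μ β).trans h.le) hp] at hlt
  exact ⟨γ, h1, h2, hlt⟩

theorem tendsto_of_tendsto_wassersteinDist (hp : 0 < p) {ι : Type*}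
    {l : Filter ι} [l.IsCountablyGenerated] {μ : ProbabilityMeasure (EuclideanSpace ℝ (Fin k))}
    {βs : ι → ProbabilityMeasure (EuclideanSpace ℝ (Fin k))}
    (hμ : MemLp id (ENNReal.ofReal p) (μ : Measure (EuclideanSpace ℝ (Fin k))))
    (hβ : ∀ i, MemLp id (ENNReal.ofReal p) (βs i : Measure (EuclideanSpace ℝ (Fin k))))
    (hW : Tendsto (fun i => wassersteinDist p (μ : Measure (EuclideanSpace ℝ (Fin k))) (βs i)) l
      (𝓝 0)) :
    Tendsto βs l (𝓝 μ) := by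
  rw [tendsto_iff_forall_lipschitz_integral_tendsto]
  rintro f ⟨C, hC⟩ ⟨L, hL⟩
  rw [Metric.tendsto_nhds]
  intro η hη
  set ε := η / (2 * (L + 1)) with hε
  have hεpos : 0 < ε := by positivity
  have hLε : L * ε < η / 2 := by
    rw [hε, mul_div_assoc', div_lt_div_iff₀ (by positivity) two_pos]
    nlinarith [L.coe_nonneg]
  obtain ⟨c, hc, hcη⟩ : ∃ c > 0, max C 0 * c / ε ^ p < η / 2 := by
    have : Tendsto (fun c : ℝ => max C 0 * c / ε ^ p) (𝓝 0) (𝓝 0) := by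
      simpa using ((continuous_const.mul continuous_id).div_const (ε ^ p)).tendsto (0 : ℝ)
    exact (this.eventually (gt_mem_nhds (half_pos hη))).exists_gt
  filter_upwards [hW.eventually (gt_mem_nhds (Real.rpow_pos_of_pos hc p⁻¹))] with i hi
  obtain ⟨γ, h1, h2, hcost⟩ := exists_coupling_of_wassersteinDist_lt hp hi
  rw [← Real.rpow_mul hc.le, inv_mul_cancel₀ hp.ne', Real.rpow_one] at hcost
  have hbound := abs_integral_sub_integral_le_of_lipschitzWith hp.le hL
    (fun x y => (hC x y).trans (le_max_left C 0))
    (integrable_norm_sub_rpow_of_map_fst_of_map_snd hp hμ (hβ i) h1 h2) h1 h2 hεpos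
  rw [Real.dist_eq, abs_sub_comm]
  calc _ ≤ _ := hbound
    _ ≤ L * ε + max C 0 * c / ε ^ p := by gcongr
    _ < η := by linarith

end Wasserstein

theorem exists_norm_le_of_wassersteinDist_map_phiAff_lt_one {m n : ℕ} {p : ℝ} (hp : 1 ≤ p)
    {μ : Measure (EuclideanSpace ℝ (Fin m))} {ν : Measure (EuclideanSpace ℝ (Fin n))}
    [IsProbabilityMeasure μ] [IsProbabilityMeasure ν]
    (hμ : MemLp id (ENNReal.ofReal p) μ) (hν : MemLp id (ENNReal.ofReal p) ν) :
    ∃ C, ∀ V b, V * Vᵀ = 1 → wassersteinDist p μ (ν.map (phiAff V b)) < 1 → ‖b‖ ≤ C := by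
  set e := ∫ x, x ∂ν
  have hcont : Continuous fun V : Matrix (Fin m) (Fin n) ℝ => phiAff V 0 e :=
    (continuous_phiAff_matrix_translation e).comp (continuous_id.prodMk continuous_const)
  obtain ⟨D, hD⟩ :=
    isCompact_setOf_mul_transpose_eq_one.exists_bound_of_continuousOn hcont.continuousOn
  refine ⟨‖∫ x, x ∂μ‖ + 2 + D, fun V b hV hW => ?_⟩
  obtain ⟨γ, h1, h2, hcost⟩ := exists_coupling_of_wassersteinDist_lt (by linarith) hW
  have hmean := norm_integral_sub_integral_le_of_map_fst_of_map_snd hp hμ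
    (memLp_map_phiAff V b hν) h1 h2
  rw [integral_map_phiAff V b (hν.integrable (by simpa using hp))] at hmean
  rw [Real.one_rpow] at hcost
  calc ‖b‖ = ‖phiAff V b e - phiAff V 0 e‖ := by simp [phiAff_apply]
    _ ≤ ‖phiAff V b e‖ + ‖phiAff V 0 e‖ := norm_sub_le _ _
    _ ≤ (‖∫ x, x ∂μ‖ + ‖∫ x, x ∂μ - phiAff V b e‖) + D := by
      gcongr
      · exact norm_le_norm_add_norm_sub _ _
      · exact hD V hV
    _ ≤ ‖∫ x, x ∂μ‖ + 2 + D := by linarith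

theorem exists_map_phiAff_eq_of_tendsto_wassersteinDist {m n : ℕ} {p : ℝ} (hp : 1 ≤ p)
    {μ : Measure (EuclideanSpace ℝ (Fin m))} {ν : Measure (EuclideanSpace ℝ (Fin n))}
    [IsProbabilityMeasure μ] [IsProbabilityMeasure ν]
    (hμ : MemLp id (ENNReal.ofReal p) μ) (hν : MemLp id (ENNReal.ofReal p) ν)
    {V : ℕ → Matrix (Fin m) (Fin n) ℝ} {b : ℕ → EuclideanSpace ℝ (Fin m)}
    (hV : ∀ k, V k * (V k)ᵀ = 1)
    (hW : Tendsto (fun k => wassersteinDist p μ (ν.map (phiAff (V k) (b k)))) atTop (𝓝 0)) :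
    ∃ V' b', V' * V'ᵀ = 1 ∧ ν.map (phiAff V' b') = μ := by
  obtain ⟨C, hC⟩ := exists_norm_le_of_wassersteinDist_map_phiAff_lt_one hp hμ hν
  have hmem : ∃ᶠ k in atTop, (V k, b k) ∈ {V | V * Vᵀ = 1} ×ˢ Metric.closedBall 0 C :=
    (hW.eventually (gt_mem_nhds one_pos)).frequently.mono fun k hk =>
      ⟨hV k, mem_closedBall_zero_iff.2 (hC _ _ (hV k) hk)⟩
  obtain ⟨⟨V', b'⟩, ⟨hV', -⟩, ψ, hψ, hlim⟩ :=
    (isCompact_setOf_mul_transpose_eq_one.prod (isCompact_closedBall 0 C)).tendsto_subseq' hmem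
  refine ⟨V', b', hV', ?_⟩
  let ν' : ProbabilityMeasure (EuclideanSpace ℝ (Fin n)) := ⟨ν, inferInstance⟩
  have hweak : Tendsto (fun k => ν'.map (continuous_phiAff (V (ψ k)) (b (ψ k))).aemeasurable)
      atTop (𝓝 ⟨μ, inferInstance⟩) :=
    tendsto_of_tendsto_wassersteinDist (by linarith) hμ (fun k => memLp_map_phiAff _ _ hν)
      (hW.comp hψ.tendsto_atTop)
  exact congrArg ProbabilityMeasure.toMeasure
    (tendsto_nhds_unique (tendsto_map_phiAff ν' hlim) hweak)

theorem augmented_wasserstein_eq_zero_iff {m n : ℕ} (hmn : m ≤ n) (p : ℝ) (hp : 1 ≤ p)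
    (μ : Measure (EuclideanSpace ℝ (Fin m))) (ν : Measure (EuclideanSpace ℝ (Fin n)))
    [IsProbabilityMeasure μ] [IsProbabilityMeasure ν]
    (hμ : Integrable (fun x => ‖x‖ ^ p) μ) (hν : Integrable (fun x => ‖x‖ ^ p) ν) :
    sInf {r : ℝ | ∃ (V : Matrix (Fin m) (Fin n) ℝ) (b : EuclideanSpace ℝ (Fin m)),
        V * V.transpose = 1 ∧ r = wassersteinDist p μ (ν.map (phiAff V b))} = 0 ↔
    ∃ (V : Matrix (Fin m) (Fin n) ℝ) (b : EuclideanSpace ℝ (Fin m)),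
        V * V.transpose = 1 ∧ ν.map (phiAff V b) = μ := by
  have hp0 : 0 < p := by linarith
  set S := {r : ℝ | ∃ (V : Matrix (Fin m) (Fin n) ℝ) (b : EuclideanSpace ℝ (Fin m)),
    V * V.transpose = 1 ∧ r = wassersteinDist p μ (ν.map (phiAff V b))}
  have hS : ∀ r ∈ S, 0 ≤ r := by
    rintro _ ⟨V, b, -, rfl⟩
    exact wassersteinDist_nonneg _ _
  refine ⟨fun h0 => ?_, fun ⟨V, b, hV, hμ⟩ => ?_⟩
  · obtain ⟨V₀, hV₀⟩ := exists_mul_transpose_eq_one (Fin.castLEEmb hmn)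
    have hseq (k : ℕ) : ∃ V b, V * Vᵀ = 1 ∧
        wassersteinDist p μ (ν.map (phiAff V b)) < 1 / (k + 1) := by
      obtain ⟨_, ⟨V, b, hV, rfl⟩, hlt⟩ := exists_lt_of_csInf_lt
        ⟨_, by exact ⟨V₀, 0, hV₀, rfl⟩⟩ (h0.trans_lt (by positivity : (0 : ℝ) < 1 / (k + 1)))
      exact ⟨V, b, hV, hlt⟩
    choose V b hV hW using hseq
    exact exists_map_phiAff_eq_of_tendsto_wassersteinDist hp
      (memLp_id_of_integrable_norm_rpow hp0 hμ) (memLp_id_of_integrable_norm_rpow hp0 hν) hV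
      (squeeze_zero (fun k => wassersteinDist_nonneg _ _) (fun k => (hW k).le)
        tendsto_one_div_add_atTop_nhds_zero_nat)
  · subst hμ
    exact le_antisymm (csInf_le ⟨0, hS⟩ ⟨V, b, hV, (wassersteinDist_self hp0.ne' _).symm⟩)
      (Real.sInf_nonneg hS)
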